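/- Fix c_0 > 0. For every δ > 0 there exists N such that for all n ≥ N, for every probability distribution H on ℝ with H([0, ∞)) = 1, for X_1, …, X_n i.i.d. with cdf F(t) = ∫ Φ(t − μ) dH(μ), and for every constant c: P(Y_n ≥ c) ≤ P(W_n^{++}(c_0) ≥ c) + 2(1 + δ) n^{−c_0}. -/

import Mathlib

/-!
On the event `Fₙ(0) ≤ F(0) + √(c₀ log n / n)`, every `t ∈ [0, √(2 log n)]` satisfies
`Fₙ(0) - √(c₀ log n / n) ≤ F(0) ≤ F(t) ≤ Φ(t) ≤ Φ(√(2 log n))`, where `F ≤ Φ` because the mixing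
measure lives on `[0, ∞)`; so the supremum defining `Yₙ` runs over a subset of the one defining
`Wₙ⁺⁺(c₀)`. By Hoeffding's inequality the complementary event has probability at most
`exp(-2 c₀ log n) = n^(-2c₀) ≤ n^(-c₀)`.
-/

open MeasureTheory ProbabilityTheory Filter
open scoped Classical

noncomputable section

/-- The standard normal density. -/
def stdPdf (x : ℝ) : ℝ := (Real.sqrt (2 * Real.pi))⁻¹ * Real.exp (-(x ^ 2) / 2)

/-- The standard normal cumulative distribution function. -/
def Phi (t : ℝ) : ℝ := ∫ x in Set.Iic t, stdPdf x

/-- `D(μ; τ, τ')`. -/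
def Dfun (μ τ τ' : ℝ) : ℝ := (Phi τ - Phi (τ - μ)) / (Phi τ' - Phi (τ' - μ))

/-- Empirical cdf of a sample of size `n`. -/
def empCdf (n : ℕ) (X : Fin n → ℝ) (t : ℝ) : ℝ :=
  (n : ℝ)⁻¹ * ∑ i, if X i ≤ t then (1 : ℝ) else 0

/-- Upper envelope `F⁺ₐ`. -/
def envP (n : ℕ) (a : ℝ) (G : ℝ → ℝ) (t : ℝ) : ℝ :=
  (2 * G t + a ^ 2 / n + (a / Real.sqrt n) * Real.sqrt (a ^ 2 / n + 4 * G t - 4 * (G t) ^ 2)) /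
    (2 * (1 + a ^ 2 / n))

/-- Lower envelope `F⁻ₐ`. -/
def envM (n : ℕ) (a : ℝ) (G : ℝ → ℝ) (t : ℝ) : ℝ :=
  (2 * G t + a ^ 2 / n - (a / Real.sqrt n) * Real.sqrt (a ^ 2 / n + 4 * G t - 4 * (G t) ^ 2)) /
    (2 * (1 + a ^ 2 / n))

/-- Grid points `t_j = (j - 1)/√(2 log n)`. -/
def gridPt (n : ℕ) (j : ℕ) : ℝ := ((j : ℝ) - 1) / Real.sqrt (2 * Real.log n)

/-- Right-hand side ratio used in the defining equation for `μ̂⁽ʲ⁾`. -/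
def ratioJ (n : ℕ) (a : ℝ) (X : Fin n → ℝ) (j : ℕ) : ℝ :=
  (Phi (gridPt n j) - envP n a (empCdf n X) (gridPt n j)) /
    (Phi (gridPt n (j + 1)) - envM n a (empCdf n X) (gridPt n (j + 1)))

/-- `μ̂⁽ʲ⁾`: the solution of `D(μ; t_j, t_{j+1}) = ratio`, when it exists (else 0). -/
def muHatJ (n : ℕ) (a : ℝ) (X : Fin n → ℝ) (j : ℕ) : ℝ :=
  if h : ∃ μ > 0, Dfun μ (gridPt n j) (gridPt n (j + 1)) = ratioJ n a X j then h.choose else 0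

/-- `ε̂⁽ʲ⁾ₐ`. -/
def epsHatJ (n : ℕ) (a : ℝ) (X : Fin n → ℝ) (j : ℕ) : ℝ :=
  if ∃ μ > 0, Dfun μ (gridPt n j) (gridPt n (j + 1)) = ratioJ n a X j then
    (Phi (gridPt n j) - envP n a (empCdf n X) (gridPt n j)) /
      (Phi (gridPt n j) - Phi (gridPt n j - muHatJ n a X j))
  else 0

/-- The grid estimator `ε̂*ₐ = max_j ε̂⁽ʲ⁾ₐ`. -/
def epsHatStar (n : ℕ) (a : ℝ) (X : Fin n → ℝ) : ℝ :=
  sSup ((fun j => epsHatJ n a X j) '' (Set.Icc 1 (Nat.ceil (2 * Real.log n))))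

/-- The statistic `W_n⁺`, as a function of a uniform sample. -/
def WnPlus (n : ℕ) (U : Fin n → ℝ) : ℝ :=
  sSup ((fun t => Real.sqrt n * |empCdf n U t - t| / Real.sqrt (t * (1 - t))) ''
    (Set.Icc (1 / 2) (Phi (Real.sqrt (2 * Real.log n)))))

/-- The statistic `Y_n`, as a function of the sample, for underlying cdf `F`. -/
def Yn (n : ℕ) (F : ℝ → ℝ) (X : Fin n → ℝ) : ℝ :=
  sSup ((fun t => Real.sqrt n * |empCdf n X t - F t| / Real.sqrt (F t * (1 - F t))) ''
    (Set.Icc 0 (Real.sqrt (2 * Real.log n))))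

/-- The statistic `W_n⁺⁺(c₀)`, as a function of the sample, for underlying cdf `F`. -/
def WnPP (c0 : ℝ) (n : ℕ) (F : ℝ → ℝ) (X : Fin n → ℝ) : ℝ :=
  sSup ((fun x => Real.sqrt n * |empCdf n X x - F x| / Real.sqrt (F x * (1 - F x))) ''
    {x : ℝ | empCdf n X 0 - Real.sqrt (c0 * Real.log n / n) ≤ F x ∧
      F x ≤ Phi (Real.sqrt (2 * Real.log n))})

/-- cdf of the two-point Gaussian mixture `(1-ε)N(0,1) + εN(μ,1)`. -/
def twoPointCdf (ε μ : ℝ) (t : ℝ) : ℝ := (1 - ε) * Phi t + ε * Phi (t - μ)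

/-- cdf of the one-sided Gaussian mixture `(1-ε)N(0,1) + ε ∫ N(μ,1) dH(μ)`. -/
def oneSidedCdf (ε : ℝ) (H : Measure ℝ) (t : ℝ) : ℝ :=
  (1 - ε) * Phi t + ε * ∫ m, Phi (t - m) ∂H

/-- cdf of the Uniform(0,1) distribution. -/
def unifCdf (t : ℝ) : ℝ := max 0 (min t 1)

/-- `X₁, …, Xₙ` are i.i.d. with cdf `F` under `P`. -/
def IIDWithCdf {Ω : Type} [MeasurableSpace Ω] (P : Measure Ω) {n : ℕ}
    (X : Fin n → Ω → ℝ) (F : ℝ → ℝ) : Prop :=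
  (∀ i, Measurable (X i)) ∧ iIndepFun X P ∧
    ∀ i t, P {ω | X i ω ≤ t} = ENNReal.ofReal (F t)

/-- The event that `F` lies inside the envelope on `[0, √(2 log n)]`. -/
def EnvEvent (n : ℕ) (a : ℝ) (F : ℝ → ℝ) (X : Fin n → ℝ) : Prop :=
  ∀ t ∈ Set.Icc (0 : ℝ) (Real.sqrt (2 * Real.log n)),
    envM n a (empCdf n X) t ≤ F t ∧ F t ≤ envP n a (empCdf n X) t

/-- The detection boundary `ρ*(β)`. -/
def rhoStar (β : ℝ) : ℝ :=
  if β ≤ 3 / 4 then β - 1 / 2 else (1 - Real.sqrt (1 - β)) ^ 2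



lemma stdPdf_eq_gaussianPDFReal : stdPdf = gaussianPDFReal 0 1 := by
  ext x; simp [stdPdf, gaussianPDFReal]

lemma integrable_stdPdf : Integrable stdPdf :=
  stdPdf_eq_gaussianPDFReal ▸ integrable_gaussianPDFReal 0 1

lemma setIntegral_stdPdf_pos {s : Set ℝ} (hs : volume s ≠ 0) : 0 < ∫ x in s, stdPdf x := by
  have hpos : ∀ x, 0 < stdPdf x := fun x =>
    stdPdf_eq_gaussianPDFReal ▸ gaussianPDFReal_pos 0 1 x one_ne_zero
  rw [setIntegral_pos_iff_support_of_nonneg_ae (ae_of_all _ fun x => (hpos x).le)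
    integrable_stdPdf.integrableOn]
  simpa [Function.support, (hpos _).ne', pos_iff_ne_zero] using hs

lemma Phi_pos (t : ℝ) : 0 < Phi t := setIntegral_stdPdf_pos (by simp)

lemma Phi_lt_one (t : ℝ) : Phi t < 1 := by
  have hsplit : Phi t + ∫ x in Set.Ioi t, stdPdf x = 1 := by
    rw [Phi, ← setIntegral_union (Set.Iic_disjoint_Ioi le_rfl) measurableSet_Ioi
      integrable_stdPdf.integrableOn integrable_stdPdf.integrableOn, Set.Iic_union_Ioi,
      setIntegral_univ, stdPdf_eq_gaussianPDFReal, integral_gaussianPDFReal_eq_one 0 one_ne_zero]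
  linarith [setIntegral_stdPdf_pos (s := Set.Ioi t) (by simp)]

lemma Phi_mono : Monotone Phi := fun _ _ hab =>
  setIntegral_mono_set integrable_stdPdf.integrableOn
    (ae_of_all _ fun x => (stdPdf_eq_gaussianPDFReal ▸ gaussianPDFReal_nonneg 0 1 x))
    (Set.Iic_subset_Iic.2 hab).eventuallyLE

section GaussianLocationMixture

variable (H : Measure ℝ) [IsProbabilityMeasure H]

lemma integrable_Phi_sub (t : ℝ) : Integrable (fun m => Phi (t - m)) H :=
  (integrable_const (1 : ℝ)).mono'
    (Phi_mono.measurable.comp (measurable_const.sub measurable_id)).aestronglyMeasurable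
    (ae_of_all _ fun m => by
      rw [Real.norm_eq_abs, abs_of_pos (Phi_pos _)]; exact (Phi_lt_one _).le)

lemma monotone_integral_Phi_sub : Monotone fun t => ∫ m, Phi (t - m) ∂H := fun a b hab =>
  integral_mono (integrable_Phi_sub H a) (integrable_Phi_sub H b)
    fun m => Phi_mono (by linarith)

lemma integral_Phi_sub_pos (t : ℝ) : 0 < ∫ m, Phi (t - m) ∂H := by
  rw [integral_pos_iff_support_of_nonneg (fun m => (Phi_pos _).le) (integrable_Phi_sub H t)]
  simp [Function.support, (Phi_pos _).ne']

lemma integral_Phi_sub_le_Phi {H : Measure ℝ} [IsProbabilityMeasure H] (hH : H (Set.Ici 0) = 1)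
    (t : ℝ) : ∫ m, Phi (t - m) ∂H ≤ Phi t := by
  have hnonneg : ∀ᵐ m ∂H, m ∈ Set.Ici 0 :=
    mem_ae_iff.2 ((prob_compl_eq_zero_iff measurableSet_Ici).2 hH)
  calc ∫ m, Phi (t - m) ∂H ≤ ∫ _, Phi t ∂H :=
        integral_mono_ae (integrable_Phi_sub H t) (integrable_const _)
          (hnonneg.mono fun m hm => Phi_mono (by simp only [Set.mem_Ici] at hm; linarith))
    _ = Phi t := by simp

end GaussianLocationMixture

lemma empCdf_nonneg (n : ℕ) (Y : Fin n → ℝ) (x : ℝ) : 0 ≤ empCdf n Y x :=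
  mul_nonneg (by positivity) (Finset.sum_nonneg fun _ _ => by split <;> norm_num)

lemma empCdf_le_one (n : ℕ) (Y : Fin n → ℝ) (x : ℝ) : empCdf n Y x ≤ 1 := by
  have hsum : ∑ i, (if Y i ≤ x then (1 : ℝ) else 0) ≤ n := by
    simpa using Finset.sum_le_sum fun i (_ : i ∈ Finset.univ) =>
      (show (if Y i ≤ x then (1 : ℝ) else 0) ≤ 1 by split <;> norm_num)
  rcases Nat.eq_zero_or_pos n with rfl | hn
  · simp [empCdf]
  · rw [empCdf, inv_mul_le_iff₀ (by positivity), mul_one]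
    exact hsum

lemma empCdf_eq_zero_of_lt {n : ℕ} {Y : Fin n → ℝ} {x : ℝ} (h : ∀ i, x < Y i) :
    empCdf n Y x = 0 := by
  simp [empCdf, fun i => not_le.2 (h i)]

def normDev (n : ℕ) (F : ℝ → ℝ) (Y : Fin n → ℝ) (x : ℝ) : ℝ :=
  Real.sqrt n * |empCdf n Y x - F x| / Real.sqrt (F x * (1 - F x))

lemma abs_sub_div_sqrt_le {g f ρ b : ℝ} (hg0 : 0 ≤ g) (hg1 : g ≤ 1) (hρ : 0 < ρ) (hρf : ρ ≤ f)
    (hfb : f ≤ b) (hb : b < 1) :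
    |g - f| / Real.sqrt (f * (1 - f)) ≤ (Real.sqrt (ρ * (1 - b)))⁻¹ := by
  rw [← one_div]
  apply div_le_div₀ zero_le_one (abs_le.2 ⟨by linarith, by linarith⟩)
    (Real.sqrt_pos.2 (by nlinarith))
  exact Real.sqrt_le_sqrt (mul_le_mul hρf (by linarith) (by linarith) (by linarith))

lemma div_sqrt_mul_one_sub_le {f b : ℝ} (hf : 0 < f) (hfb : f ≤ b) (hb : b < 1) :
    f / Real.sqrt (f * (1 - f)) ≤ (Real.sqrt (1 - b))⁻¹ := by
  have hsf : 0 < Real.sqrt f := Real.sqrt_pos.2 hf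
  rw [Real.sqrt_mul hf.le]
  nth_rw 1 [← Real.mul_self_sqrt hf.le]
  rw [mul_div_mul_left _ _ hsf.ne', ← one_div]
  refine div_le_div₀ zero_le_one ?_ (Real.sqrt_pos.2 (by linarith))
    (Real.sqrt_le_sqrt (by linarith))
  exact Real.sqrt_le_one.2 (by linarith)

lemma bddAbove_normDev_image {n : ℕ} (hn : 0 < n) (Y : Fin n → ℝ) {F : ℝ → ℝ}
    (hF : Monotone F) (hFpos : ∀ x, 0 < F x) {b : ℝ} (hb : b < 1) :
    BddAbove (normDev n F Y '' {x | F x ≤ b}) := by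
  have : Nonempty (Fin n) := ⟨⟨0, hn⟩⟩
  set m := Finset.univ.inf' Finset.univ_nonempty Y
  refine ⟨Real.sqrt n * ((Real.sqrt (F m * (1 - b)))⁻¹ + (Real.sqrt (1 - b))⁻¹), ?_⟩
  rintro _ ⟨x, hxb, rfl⟩
  rw [normDev, mul_div_assoc]
  refine mul_le_mul_of_nonneg_left ?_ (Real.sqrt_nonneg _)
  have hpos₁ : 0 ≤ (Real.sqrt (F m * (1 - b)))⁻¹ := by positivity
  have hpos₂ : 0 ≤ (Real.sqrt (1 - b))⁻¹ := by positivity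
  -- Above the sample minimum `F ≥ F m > 0`; below it the empirical cdf vanishes.
  by_cases hmx : m ≤ x
  · have := abs_sub_div_sqrt_le (empCdf_nonneg n Y x) (empCdf_le_one n Y x) (hFpos m) (hF hmx)
      hxb hb
    linarith
  · have hlt : ∀ i, x < Y i := fun i =>
      (not_le.1 hmx).trans_le (Finset.inf'_le _ (Finset.mem_univ i))
    have := div_sqrt_mul_one_sub_le (hFpos x) hxb hb
    rw [empCdf_eq_zero_of_lt hlt, zero_sub, abs_neg, abs_of_pos (hFpos x)]
    linarith

lemma Yn_le_WnPP {c0 : ℝ} {n : ℕ} (hn : 0 < n) {F : ℝ → ℝ} (hF : Monotone F)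
    (hFpos : ∀ x, 0 < F x) (hFPhi : ∀ x, F x ≤ Phi x) {Y : Fin n → ℝ}
    (hY : empCdf n Y 0 ≤ F 0 + Real.sqrt (c0 * Real.log n / n)) :
    Yn n F Y ≤ WnPP c0 n F Y := by
  have hsub : Set.Icc 0 (Real.sqrt (2 * Real.log n)) ⊆
      {x | empCdf n Y 0 - Real.sqrt (c0 * Real.log n / n) ≤ F x ∧
        F x ≤ Phi (Real.sqrt (2 * Real.log n))} := fun x ⟨hx0, hx⟩ =>
    ⟨by linarith [hF hx0], (hFPhi x).trans (Phi_mono hx)⟩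
  refine csSup_le_csSup ?_ (Set.image_nonempty.2 (Set.nonempty_Icc.2 (Real.sqrt_nonneg _)))
    (Set.image_mono hsub)
  exact (bddAbove_normDev_image hn Y hF hFpos (Phi_lt_one _)).mono
    (Set.image_mono fun x hx => hx.2)

lemma IIDWithCdf.measureReal_empCdf_ge_le {Ω : Type} [MeasurableSpace Ω] {P : Measure Ω}
    [IsProbabilityMeasure P] {n : ℕ} {X : Fin n → Ω → ℝ} {F : ℝ → ℝ} (hX : IIDWithCdf P X F)
    {t : ℝ} (hFt : 0 ≤ F t) {ε : ℝ} (hε : 0 ≤ ε) :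
    P.real {ω | F t + ε ≤ empCdf n (fun i => X i ω) t} ≤ Real.exp (-2 * n * ε ^ 2) := by
  obtain ⟨hmeas, hind, hcdf⟩ := hX
  rcases Nat.eq_zero_or_pos n with rfl | hn
  · simp
  set B : Fin n → Ω → ℝ := fun i ω => (Set.Iic t).indicator 1 (X i ω)
  have hBmeas : ∀ i, Measurable (B i) := fun i =>
    (measurable_one.indicator measurableSet_Iic).comp (hmeas i)
  have hBmean : ∀ i, P[B i] = F t := fun i => by
    rw [show B i = (X i ⁻¹' Set.Iic t).indicator 1 by ext; simp [B, Set.indicator_apply],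
      integral_indicator_one (hmeas i measurableSet_Iic), measureReal_def]
    exact (congrArg ENNReal.toReal (hcdf i t)).trans (ENNReal.toReal_ofReal hFt)
  have hsubG : ∀ i ∈ Finset.univ,
      HasSubgaussianMGF (fun ω => B i ω - F t) ((‖(1 : ℝ) - 0‖₊ / 2) ^ 2) P := fun i _ => by
    simpa only [hBmean] using hasSubgaussianMGF_of_mem_Icc (hBmeas i).aemeasurable
      (ae_of_all P fun ω => (show B i ω ∈ Set.Icc 0 1 by
        simp only [B, Set.indicator_apply]; split <;> simp))
  have hind' : iIndepFun (fun i ω => B i ω - F t) P :=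
    hind.comp (fun _ x => (Set.Iic t).indicator 1 x - F t)
      fun _ => (measurable_one.indicator measurableSet_Iic).sub_const _
  have hevent : {ω | F t + ε ≤ empCdf n (fun i => X i ω) t} =
      {ω | n * ε ≤ ∑ i, (B i ω - F t)} := by
    ext ω
    simp only [Set.mem_ofPred_eq, empCdf, B, Finset.sum_sub_distrib, Finset.sum_const,
      Finset.card_univ, Fintype.card_fin, nsmul_eq_mul, Set.indicator_apply, Set.mem_Iic,
      Pi.one_apply]
    rw [le_inv_mul_iff₀ (by positivity)]
    constructor <;> intro h <;> linarith
  rw [hevent]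
  refine (HasSubgaussianMGF.measure_sum_ge_le_of_iIndepFun hind' hsubG
    (by positivity)).trans_eq ?_
  congr 1
  simp only [sub_zero, nnnorm_one, one_div, inv_pow, Finset.sum_const, Finset.card_univ,
    Fintype.card_fin, nsmul_eq_mul, NNReal.coe_mul, NNReal.coe_natCast, NNReal.coe_inv,
    NNReal.coe_pow, NNReal.coe_ofNat, neg_mul]
  field_simp

lemma exp_neg_two_mul_sq_sqrt_log_div_le_rpow {c : ℝ} (hc : 0 ≤ c) {n : ℕ} (hn : 1 ≤ n) :
    Real.exp (-2 * n * Real.sqrt (c * Real.log n / n) ^ 2) ≤ (n : ℝ) ^ (-c) := by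
  have hn' : (1 : ℝ) ≤ n := by exact_mod_cast hn
  have hlog : 0 ≤ Real.log n := Real.log_nonneg hn'
  rw [Real.sq_sqrt (by positivity), Real.rpow_def_of_pos (by linarith), Real.exp_le_exp]
  field_simp
  nlinarith [mul_nonneg hc hlog]

/-- Lemma 3.3: the tail of `Yₙ` is almost bounded by that of
`Wₙ⁺⁺(c₀)`, uniformly over one-sided Gaussian mixtures. -/
theorem stmt9 (c0 : ℝ) (hc0 : 0 < c0) :
    ∀ δ > 0, ∃ N : ℕ, ∀ n ≥ N,
      ∀ H : Measure ℝ, IsProbabilityMeasure H → H (Set.Ici 0) = 1 →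
        ∀ (Ω : Type) [MeasurableSpace Ω] (P : Measure Ω), IsProbabilityMeasure P →
          ∀ X : Fin n → Ω → ℝ, IIDWithCdf P X (fun t => ∫ m, Phi (t - m) ∂H) →
            ∀ c : ℝ,
              P {ω | c ≤ Yn n (fun t => ∫ m, Phi (t - m) ∂H) (fun i => X i ω)} ≤
                P {ω | c ≤ WnPP c0 n (fun t => ∫ m, Phi (t - m) ∂H) (fun i => X i ω)} +
                  ENNReal.ofReal (2 * (1 + δ) * (n : ℝ) ^ (-c0)) := by
  intro δ hδ
  refine ⟨1, fun n hn H _ hH Ω _ P _ X hX c => ?_⟩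
  set F := fun t => ∫ m, Phi (t - m) ∂H
  set ε := Real.sqrt (c0 * Real.log n / n)
  set E := {ω | F 0 + ε ≤ empCdf n (fun i => X i ω) 0}
  set W := {ω | c ≤ WnPP c0 n F (fun i => X i ω)}
  have hcover : {ω | c ≤ Yn n F (fun i => X i ω)} ⊆ W ∪ E :=
    fun ω hω => or_iff_not_imp_right.2 fun hE => hω.trans <|
      Yn_le_WnPP hn (monotone_integral_Phi_sub H) (integral_Phi_sub_pos H)
        (integral_Phi_sub_le_Phi hH) (not_le.1 hE).le
  have hE : P E ≤ ENNReal.ofReal (2 * (1 + δ) * (n : ℝ) ^ (-c0)) := by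
    rw [← ofReal_measureReal]
    refine ENNReal.ofReal_le_ofReal <|
      (hX.measureReal_empCdf_ge_le (integral_Phi_sub_pos H 0).le (Real.sqrt_nonneg _)).trans <|
      (exp_neg_two_mul_sq_sqrt_log_div_le_rpow hc0.le hn).trans ?_
    nlinarith [Real.rpow_nonneg n.cast_nonneg (-c0)]
  calc P {ω | c ≤ Yn n F (fun i => X i ω)} ≤ P (W ∪ E) := measure_mono hcover
    _ ≤ P W + ENNReal.ofReal (2 * (1 + δ) * (n : ℝ) ^ (-c0)) :=
      (measure_union_le _ _).trans (add_le_add_right hE _)
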